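/- arXiv:2307.10647 — 7 statements merged into one kernel-verified Lean document; each statement's English description precedes it below -/
import Mathlib

section
/- Let X be a real Banach space, x ∈ B_X and 0 < α ≤ 2. Then Dc(x) ≥ α if and only if B_X ⊆ closure(convexHull(Δ_{2−α+ε}(x))) for every ε > 0. -/
open Set Metric Filter

variable {X : Type*} [NormedAddCommGroup X] [NormedSpace ℝ X]

/-- The slice `S(f, δ)` of the closed unit ball of `X`, determined by a norm-one functional
`f` and `δ > 0` (the norm and positivity conditions are imposed at use sites). -/
def unitBallSlice (f : X →L[ℝ] ℝ) (δ : ℝ) : Set X :=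
  {y | ‖y‖ ≤ 1 ∧ 1 - δ < f y}

/-- The Daugavet constant of a point: the infimum over all slices of the unit ball of the
supremum of distances from `x` to points of the slice. -/
noncomputable def Dc (x : X) : ℝ :=
  sInf {r | ∃ (f : X →L[ℝ] ℝ) (δ : ℝ), ‖f‖ = 1 ∧ 0 < δ ∧
    r = sSup ((fun y => ‖x - y‖) '' unitBallSlice f δ)}

/-- The Δ-constant of a point: the infimum over all slices of the unit ball containing `x`
of the supremum of distances from `x` to points of the slice. -/
noncomputable def DeltaC (x : X) : ℝ :=
  sInf {r | ∃ (f : X →L[ℝ] ℝ) (δ : ℝ), ‖f‖ = 1 ∧ 0 < δ ∧ x ∈ unitBallSlice f δ ∧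
    r = sSup ((fun y => ‖x - y‖) '' unitBallSlice f δ)}

/-- The set `Δ_ε(x)` of points of the unit ball at distance at least `2 - ε` from `x`. -/
def DeltaSet (x : X) (ε : ℝ) : Set X :=
  {y | ‖y‖ ≤ 1 ∧ 2 - ε ≤ ‖y - x‖}

/-!
By Hahn–Banach, the unit ball lies in the closed convex hull of a set `A` exactly when every
slice of the ball meets `A`. On the other hand `Dc(x) ≥ α` says that every slice contains, for
each `ε > 0`, a point at distance `> α - ε` from `x`, i.e. meets `Δ_{2-α+ε}(x)`. The two
conditions differ only by the order of the quantifiers over slices and over `ε`.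
-/

theorem unitBallSlice_nonempty {f : X →L[ℝ] ℝ} (hf : ‖f‖ = 1) {δ : ℝ} (hδ : 0 < δ) :
    (unitBallSlice f δ).Nonempty := by
  obtain ⟨z, hz, hfz⟩ := f.exists_lt_apply_of_lt_opNorm (r := 1 - δ) (by linarith)
  rw [Real.norm_eq_abs] at hfz
  rcases le_or_gt 0 (f z) with h0 | h0
  · exact ⟨z, hz.le, by rwa [abs_of_nonneg h0] at hfz⟩
  · refine ⟨-z, by simpa using hz.le, ?_⟩
    rwa [map_neg, ← abs_of_neg h0]

theorem bddAbove_norm_sub_image_unitBallSlice (x : X) (f : X →L[ℝ] ℝ) (δ : ℝ) :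
    BddAbove ((fun y => ‖x - y‖) '' unitBallSlice f δ) := by
  refine ⟨‖x‖ + 1, ?_⟩
  rintro _ ⟨y, ⟨hy, -⟩, rfl⟩
  linarith [norm_sub_le x y]

theorem le_sSup_norm_sub_image_unitBallSlice_iff (x : X) {f : X →L[ℝ] ℝ} (hf : ‖f‖ = 1)
    {δ : ℝ} (hδ : 0 < δ) (α : ℝ) :
    α ≤ sSup ((fun y => ‖x - y‖) '' unitBallSlice f δ) ↔
      ∀ ε > (0 : ℝ), ∃ y ∈ DeltaSet x (2 - α + ε), 1 - δ < f y := by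
  constructor
  · intro hα ε hε
    obtain ⟨_, ⟨y, ⟨hy, hfy⟩, rfl⟩, hlt⟩ :=
      exists_lt_of_lt_csSup ((unitBallSlice_nonempty hf hδ).image _) (by linarith : α - ε < _)
    exact ⟨y, ⟨hy, by rw [norm_sub_rev]; linarith⟩, hfy⟩
  · intro h
    refine le_of_forall_pos_le_add fun ε hε => ?_
    obtain ⟨y, ⟨hy, hdist⟩, hfy⟩ := h ε hε
    have : ‖x - y‖ ≤ sSup ((fun y => ‖x - y‖) '' unitBallSlice f δ) :=
      le_csSup (bddAbove_norm_sub_image_unitBallSlice x f δ) ⟨y, ⟨hy, hfy⟩, rfl⟩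
    rw [norm_sub_rev] at this
    linarith

theorem le_Dc_iff [Nontrivial X] (x : X) (α : ℝ) :
    α ≤ Dc x ↔ ∀ f : X →L[ℝ] ℝ, ‖f‖ = 1 → ∀ δ > (0 : ℝ),
      α ≤ sSup ((fun y => ‖x - y‖) '' unitBallSlice f δ) := by
  obtain ⟨f₀, hf₀, -⟩ := exists_dual_vector' ℝ (0 : X)
  have hbdd : BddBelow {r | ∃ (f : X →L[ℝ] ℝ) (δ : ℝ), ‖f‖ = 1 ∧ 0 < δ ∧
      r = sSup ((fun y => ‖x - y‖) '' unitBallSlice f δ)} := by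
    refine ⟨0, ?_⟩
    rintro _ ⟨f, δ, -, -, rfl⟩
    exact Real.sSup_nonneg (by rintro _ ⟨y, -, rfl⟩; positivity)
  rw [Dc, le_csInf_iff hbdd ⟨_, f₀, 1, hf₀, one_pos, rfl⟩]
  constructor
  · exact fun h f hf δ hδ => h _ ⟨f, δ, hf, hδ, rfl⟩
  · rintro h _ ⟨f, δ, hf, hδ, rfl⟩
    exact h f hf δ hδ

theorem Dc_eq_zero_of_subsingleton [Subsingleton X] (x : X) : Dc x = 0 := by
  unfold Dc
  convert Real.sInf_empty
  refine eq_empty_of_forall_notMem ?_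
  rintro _ ⟨f, δ, hf, -, -⟩
  simp [Subsingleton.elim f 0] at hf

theorem DeltaSet_eq_empty_of_subsingleton {E : Type*} [NormedAddCommGroup E] [Subsingleton E]
    (x : E) {ε : ℝ} (hε : ε < 2) :
    DeltaSet x ε = ∅ := by
  refine eq_empty_of_forall_notMem ?_
  rintro y ⟨-, hy⟩
  rw [Subsingleton.elim y x, sub_self, norm_zero] at hy
  linarith

theorem unitBall_subset_closure_convexHull_iff [Nontrivial X] (A : Set X) :
    {y : X | ‖y‖ ≤ 1} ⊆ closure (convexHull ℝ A) ↔
      ∀ f : X →L[ℝ] ℝ, ‖f‖ = 1 → ∀ δ > (0 : ℝ), ∃ a ∈ A, 1 - δ < f a := by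
  constructor
  · intro hball f hf δ hδ
    by_contra! hA
    have hhalf : closure (convexHull ℝ A) ⊆ {y | f y ≤ 1 - δ} :=
      closure_minimal (convexHull_min hA (convex_halfSpace_le f.isLinear _))
        (isClosed_le f.continuous continuous_const)
    obtain ⟨z, hz, hfz⟩ := unitBallSlice_nonempty hf hδ
    exact (hhalf (hball hz)).not_gt hfz
  · intro hslices b hb
    by_contra hbA
    obtain ⟨f, u, hfA, hub⟩ := geometric_hahn_banach_closed_point
      (convex_convexHull ℝ A).closure isClosed_closure hbA
    have hA : ∀ a ∈ A, f a < u := fun a ha => hfA a (subset_closure (subset_convexHull ℝ A ha))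
    rcases eq_or_ne f 0 with rfl | hf0
    · -- `b` is separated from the hull by the zero functional only when `A` is empty.
      obtain ⟨g, hg, -⟩ := exists_dual_vector' ℝ (0 : X)
      obtain ⟨a, ha, -⟩ := hslices g hg 1 one_pos
      have hau := hA a ha
      simp only [zero_apply] at hau hub
      linarith
    have hnorm : 0 < ‖f‖ := norm_pos_iff.mpr hf0
    set g := ‖f‖⁻¹ • f with hg_def
    have hg : ‖g‖ = 1 := by rw [norm_smul, norm_inv, norm_norm, inv_mul_cancel₀ hnorm.ne']
    have hgb : g b ≤ 1 := (le_abs_self _).trans ((g.le_opNorm b).trans (by rw [hg]; simpa using hb))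
    have hgu : ∀ y, ‖f‖⁻¹ * u < g y ↔ u < f y := fun y => by
      rw [hg_def, smul_apply, smul_eq_mul, mul_lt_mul_iff_right₀ (inv_pos.mpr hnorm)]
    obtain ⟨a, ha, hga⟩ := hslices g hg (1 - ‖f‖⁻¹ * u) (by linarith [(hgu b).2 hub])
    exact (hA a ha).not_gt ((hgu a).1 (by linarith))

theorem daugavetConstant_ge_iff_general (x : X)
    (α : ℝ) (hα₀ : 0 < α) :
    α ≤ Dc x ↔
      ∀ ε > (0 : ℝ), {y : X | ‖y‖ ≤ 1} ⊆ closure (convexHull ℝ (DeltaSet x (2 - α + ε))) := by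
  rcases subsingleton_or_nontrivial X with _ | _
  · refine iff_of_false (by rw [Dc_eq_zero_of_subsingleton]; linarith) fun h => ?_
    have h0 := h (α / 2) (half_pos hα₀) (show ‖(0 : X)‖ ≤ 1 by simp)
    rw [DeltaSet_eq_empty_of_subsingleton x (by linarith)] at h0
    simp at h0
  · simp only [le_Dc_iff, unitBall_subset_closure_convexHull_iff]
    constructor
    · intro h ε hε f hf δ hδ
      exact (le_sSup_norm_sub_image_unitBallSlice_iff x hf hδ α).mp (h f hf δ hδ) ε hε
    · intro h f hf δ hδ
      exact (le_sSup_norm_sub_image_unitBallSlice_iff x hf hδ α).mpr fun ε hε => h ε hε f hf δ hδ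

/-- `Dc(x) ≥ α` iff the unit ball is contained in the closed convex hull of
`Δ_{2-α+ε}(x)` for every `ε > 0`. -/
theorem daugavetConstant_ge_iff [CompleteSpace X] (x : X) (hx : ‖x‖ ≤ 1)
    (α : ℝ) (hα₀ : 0 < α) (hα₂ : α ≤ 2) :
    α ≤ Dc x ↔
      ∀ ε > (0 : ℝ), {y : X | ‖y‖ ≤ 1} ⊆ closure (convexHull ℝ (DeltaSet x (2 - α + ε))) :=
  daugavetConstant_ge_iff_general x α hα₀
end

section
/- Let X be a real Banach space, x ∈ B_X and 0 < α ≤ 2. Then Δc(x) ≥ α if and only if x ∈ closure(convexHull(Δ_{2−α+ε}(x))) for every ε > 0. -/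
open Set Metric Filter

variable {X : Type*} [NormedAddCommGroup X] [NormedSpace ℝ X]

/-!
By Hahn–Banach, a point `x` of the unit ball lies in the closed convex hull of a set `A` iff
every slice of the unit ball containing `x` meets `A`. On the other hand, `Δc(x) ≥ α` says that
every slice containing `x` contains, for each `ε > 0`, a point at distance at least `α - ε` from
`x`, that is, a point of `Δ_{2-α+ε}(x)`. The two conditions agree after exchanging the
quantifiers over slices and over `ε`.
-/

section LocallyConvex

variable {E : Type*} [AddCommGroup E] [Module ℝ E] [TopologicalSpace E] [IsTopologicalAddGroup E]
  [ContinuousSMul ℝ E] [LocallyConvexSpace ℝ E]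

theorem mem_closure_convexHull_iff_forall_exists_lt {A : Set E} {x : E} :
    x ∈ closure (convexHull ℝ A) ↔ ∀ (f : E →L[ℝ] ℝ) (c : ℝ), c < f x → ∃ y ∈ A, c < f y := by
  constructor
  · intro hx f c hc
    by_contra! hA
    have hsub : closure (convexHull ℝ A) ⊆ {y | f y ≤ c} :=
      closure_minimal (convexHull_min hA (convex_halfSpace_le f.isLinear c))
        (isClosed_le f.continuous continuous_const)
    exact (hsub hx).not_gt hc
  · intro h
    by_contra hx
    obtain ⟨f, u, hA, hxu⟩ :=
      geometric_hahn_banach_closed_point (convex_convexHull ℝ A).closure isClosed_closure hx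
    obtain ⟨y, hy, hfy⟩ := h f u hxu
    exact (hA y (subset_closure (subset_convexHull ℝ A hy))).not_gt hfy

end LocallyConvex

theorem apply_le_one_of_norm_le_one {f : X →L[ℝ] ℝ} (hf : ‖f‖ = 1) {x : X} (hx : ‖x‖ ≤ 1) :
    f x ≤ 1 :=
  calc f x ≤ ‖f x‖ := le_abs_self _
    _ ≤ 1 * ‖x‖ := f.le_of_opNorm_le hf.le x
    _ ≤ 1 := by rwa [one_mul]

theorem exists_mem_unitBallSlice [Nontrivial X] {x : X} (hx : ‖x‖ ≤ 1) :
    ∃ f : X →L[ℝ] ℝ, ‖f‖ = 1 ∧ x ∈ unitBallSlice f 2 := by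
  obtain ⟨f, hf, hfx⟩ := exists_dual_vector' ℝ x
  refine ⟨f, hf, hx, ?_⟩
  rw [hfx, RCLike.ofReal_real_eq_id, id]
  linarith [norm_nonneg x]

theorem mem_closure_convexHull_iff_forall_unitBallSlice [Nontrivial X] {A : Set X} {x : X}
    (hx : ‖x‖ ≤ 1) :
    x ∈ closure (convexHull ℝ A) ↔ ∀ (f : X →L[ℝ] ℝ) (δ : ℝ), ‖f‖ = 1 → 0 < δ →
      x ∈ unitBallSlice f δ → ∃ y ∈ A, 1 - δ < f y := by
  rw [mem_closure_convexHull_iff_forall_exists_lt]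
  constructor
  · intro h f δ _ _ hxS
    exact h f (1 - δ) hxS.2
  · intro h f c hc
    by_cases hf : f = 0
    · obtain ⟨g, hg, hxg⟩ := exists_mem_unitBallSlice hx
      obtain ⟨y, hy, -⟩ := h g 2 hg two_pos hxg
      subst hf
      exact ⟨y, hy, hc⟩
    -- Rescale `f` to norm one; the half-space `c < f` becomes the slice of depth `1 - c / ‖f‖`.
    have hnorm : 0 < ‖f‖ := norm_pos_iff.mpr hf
    have hg : ‖‖f‖⁻¹ • f‖ = 1 := norm_smul_inv_norm hf
    have hscale : ∀ y, c < f y ↔ 1 - (1 - c / ‖f‖) < (‖f‖⁻¹ • f) y := fun y => by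
      change _ ↔ _ < ‖f‖⁻¹ * f y
      rw [sub_sub_cancel, inv_mul_eq_div, div_lt_div_iff_of_pos_right hnorm]
    have hxS : x ∈ unitBallSlice (‖f‖⁻¹ • f) (1 - c / ‖f‖) := ⟨hx, (hscale x).mp hc⟩
    have hδ : 0 < 1 - c / ‖f‖ := by
      linarith [hxS.2, apply_le_one_of_norm_le_one hg hx]
    obtain ⟨y, hy, hfy⟩ := h _ _ hg hδ hxS
    exact ⟨y, hy, (hscale y).mpr hfy⟩

theorem le_deltaC_iff [Nontrivial X] {x : X} (hx : ‖x‖ ≤ 1) {α : ℝ} :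
    α ≤ DeltaC x ↔ ∀ (f : X →L[ℝ] ℝ) (δ : ℝ), ‖f‖ = 1 → 0 < δ → x ∈ unitBallSlice f δ →
      α ≤ sSup ((fun y => ‖x - y‖) '' unitBallSlice f δ) := by
  have hbdd : BddBelow {r | ∃ (f : X →L[ℝ] ℝ) (δ : ℝ), ‖f‖ = 1 ∧ 0 < δ ∧
      x ∈ unitBallSlice f δ ∧ r = sSup ((fun y => ‖x - y‖) '' unitBallSlice f δ)} := by
    refine ⟨0, ?_⟩
    rintro r ⟨f, δ, -, -, -, rfl⟩
    exact Real.sSup_nonneg (by rintro _ ⟨y, -, rfl⟩; exact norm_nonneg _)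
  obtain ⟨f, hf, hxS⟩ := exists_mem_unitBallSlice hx
  rw [DeltaC, le_csInf_iff hbdd ⟨_, f, 2, hf, two_pos, hxS, rfl⟩]
  constructor
  · intro h f δ hf hδ hxS
    exact h _ ⟨f, δ, hf, hδ, hxS, rfl⟩
  · rintro h _ ⟨f, δ, hf, hδ, hxS, rfl⟩
    exact h f δ hf hδ hxS

theorem le_sSup_norm_sub_iff_forall_exists_deltaSet {f : X →L[ℝ] ℝ} {δ : ℝ} {x : X}
    (hxS : x ∈ unitBallSlice f δ) {α : ℝ} :
    α ≤ sSup ((fun y => ‖x - y‖) '' unitBallSlice f δ) ↔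
      ∀ ε > (0 : ℝ), ∃ y ∈ DeltaSet x (2 - α + ε), 1 - δ < f y := by
  have hbdd : BddAbove ((fun y => ‖x - y‖) '' unitBallSlice f δ) := by
    refine ⟨‖x‖ + 1, ?_⟩
    rintro _ ⟨y, hy, rfl⟩
    linarith [norm_sub_le x y, hy.1]
  constructor
  · intro h ε hε
    obtain ⟨_, ⟨y, hy, rfl⟩, hlt⟩ :=
      exists_lt_of_lt_csSup ((nonempty_of_mem hxS).image _) (show α - ε < _ by linarith)
    refine ⟨y, ⟨hy.1, ?_⟩, hy.2⟩
    rw [norm_sub_rev]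
    linarith
  · intro h
    refine le_of_forall_pos_le_add fun ε hε => ?_
    obtain ⟨y, ⟨hy, hdist⟩, hfy⟩ := h ε hε
    have := le_csSup hbdd ⟨y, ⟨hy, hfy⟩, rfl⟩
    rw [norm_sub_rev] at hdist
    linarith

theorem deltaC_eq_zero_of_subsingleton [Subsingleton X] (x : X) : DeltaC x = 0 := by
  rw [DeltaC]
  convert Real.sInf_empty
  refine eq_empty_of_forall_notMem ?_
  rintro _ ⟨f, δ, hf, -⟩
  rw [Subsingleton.elim f 0, norm_zero] at hf
  exact zero_ne_one hf

omit [NormedSpace ℝ X] in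
theorem deltaSet_eq_empty_of_subsingleton [Subsingleton X] (x : X) {ε : ℝ} (hε : ε < 2) :
    DeltaSet x ε = ∅ := by
  refine eq_empty_of_forall_notMem fun y hy => ?_
  have := hy.2
  rw [Subsingleton.elim y x, sub_self, norm_zero] at this
  linarith

theorem deltaConstant_ge_iff_general (x : X) (hx : ‖x‖ ≤ 1)
    (α : ℝ) (hα₀ : 0 < α) :
    α ≤ DeltaC x ↔
      ∀ ε > (0 : ℝ), x ∈ closure (convexHull ℝ (DeltaSet x (2 - α + ε))) := by
  rcases subsingleton_or_nontrivial X with hX | hX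
  · refine iff_of_false (by rw [deltaC_eq_zero_of_subsingleton]; linarith) fun h => ?_
    have := h (α / 2) (by linarith)
    rw [deltaSet_eq_empty_of_subsingleton x (by linarith), convexHull_empty,
      closure_empty] at this
    exact this
  simp only [le_deltaC_iff hx, mem_closure_convexHull_iff_forall_unitBallSlice hx]
  constructor
  · intro h ε hε f δ hf hδ hxS
    exact (le_sSup_norm_sub_iff_forall_exists_deltaSet hxS).mp (h f δ hf hδ hxS) ε hε
  · intro h f δ hf hδ hxS
    exact (le_sSup_norm_sub_iff_forall_exists_deltaSet hxS).mpr fun ε hε => h ε hε f δ hf hδ hxS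

/-- `Δc(x) ≥ α` iff `x` lies in the closed convex hull of `Δ_{2-α+ε}(x)` for every `ε > 0`. -/
theorem deltaConstant_ge_iff [CompleteSpace X] (x : X) (hx : ‖x‖ ≤ 1)
    (α : ℝ) (hα₀ : 0 < α) (hα₂ : α ≤ 2) :
    α ≤ DeltaC x ↔
      ∀ ε > (0 : ℝ), x ∈ closure (convexHull ℝ (DeltaSet x (2 - α + ε))) :=
  deltaConstant_ge_iff_general x hx α hα₀
end

section
/- Let X be a real Banach space with dim(X) ≥ 2 and let x ∈ B_X. For every continuous linear functional x* on X with x*(x) = 1, the rank-one projection P = x* ⊗ x (defined by P(y) = x*(y)·x) satisfies ‖Id − P‖ ≥ Δc(x), where Id is the identity operator on X and the norm is the operator norm. -/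
open Set Metric Filter

variable {X : Type*} [NormedAddCommGroup X] [NormedSpace ℝ X]

/-! With `T = Id - x* ⊗ x` and `t = x*(y)` one has `t • (x - y) = (1 - t) • y - T y`, so every `y`
of the unit ball with `c < t` satisfies `t ‖x - y‖ ≤ ‖T‖ + |1 - t|`. Since `x*(x) = 1` and
`dim X ≥ 2`, `T` is a nonzero idempotent, so `‖T‖ ≥ 1`; this controls the points with `t ≥ 1`, and
the slice `{y ∈ B_X : x*(y) > c}`, which contains `x`, has radius at most `(‖T‖ + 1 - c) / c`
around `x`. Letting `c → 1` gives the bound. -/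

theorem IsIdempotentElem.one_le_norm {R : Type*} [NonUnitalNormedRing R] {p : R}
    (hp : IsIdempotentElem p) (h0 : p ≠ 0) : 1 ≤ ‖p‖ := by
  refine le_of_mul_le_mul_left ?_ (norm_pos_iff.mpr h0)
  simpa [hp.eq] using norm_mul_le p p

section RankOne

variable {𝕜 E : Type*} [NontriviallyNormedField 𝕜] [NormedAddCommGroup E] [NormedSpace 𝕜 E]

theorem ContinuousLinearMap.isIdempotentElem_smulRight {f : E →L[𝕜] 𝕜} {x : E} (hf : f x = 1) :
    IsIdempotentElem (f.smulRight x) := by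
  ext y
  simp [hf]

theorem ContinuousLinearMap.smulRight_ne_one (hE : 2 ≤ Module.rank 𝕜 E) (f : E →L[𝕜] 𝕜)
    (x : E) : f.smulRight x ≠ 1 := by
  intro h
  have : Module.rank 𝕜 E ≤ 1 :=
    rank_le_one_iff.mpr ⟨x, fun y => ⟨f y, by simpa using congr($h y)⟩⟩
  exact absurd (hE.trans this) (by norm_num)

theorem ContinuousLinearMap.one_le_norm_id_sub_smulRight (hE : 2 ≤ Module.rank 𝕜 E)
    {f : E →L[𝕜] 𝕜} {x : E} (hf : f x = 1) : 1 ≤ ‖ContinuousLinearMap.id 𝕜 E - f.smulRight x‖ :=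
  (isIdempotentElem_smulRight hf).one_sub.one_le_norm
    (sub_ne_zero.mpr (smulRight_ne_one hE f x).symm)

theorem ContinuousLinearMap.norm_apply_mul_norm_sub_le (f : E →L[𝕜] 𝕜) (x y : E) :
    ‖f y‖ * ‖x - y‖ ≤ (‖ContinuousLinearMap.id 𝕜 E - f.smulRight x‖ + ‖1 - f y‖) * ‖y‖ := by
  have hxy : f y • (x - y) = (1 - f y) • y - (ContinuousLinearMap.id 𝕜 E - f.smulRight x) y := by
    simp only [sub_apply, id_apply, smulRight_apply, smul_sub, sub_smul, one_smul]
    abel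
  calc ‖f y‖ * ‖x - y‖ = ‖(1 - f y) • y - (ContinuousLinearMap.id 𝕜 E - f.smulRight x) y‖ := by
        rw [← hxy, norm_smul]
    _ ≤ ‖1 - f y‖ * ‖y‖ + ‖ContinuousLinearMap.id 𝕜 E - f.smulRight x‖ * ‖y‖ := by
        grw [norm_sub_le, norm_smul, le_opNorm]
    _ = _ := by ring

end RankOne

theorem norm_sub_le_of_lt_apply {f : X →L[ℝ] ℝ} {x y : X} {c : ℝ}
    (hM : 1 ≤ ‖ContinuousLinearMap.id ℝ X - f.smulRight x‖) (hc : 0 < c) (hc1 : c ≤ 1)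
    (hy : ‖y‖ ≤ 1) (hcy : c < f y) :
    ‖x - y‖ ≤ (‖ContinuousLinearMap.id ℝ X - f.smulRight x‖ + 1 - c) / c := by
  set M := ‖ContinuousLinearMap.id ℝ X - f.smulRight x‖
  have hty : f y * ‖x - y‖ ≤ M + |1 - f y| := by
    have h := f.norm_apply_mul_norm_sub_le x y
    rw [Real.norm_eq_abs, abs_of_pos (hc.trans hcy), Real.norm_eq_abs] at h
    exact h.trans (mul_le_of_le_one_right (by positivity) hy)
  rw [le_div_iff₀ hc]
  rcases le_total (f y) 1 with ht | ht
  · rw [abs_of_nonneg (by linarith)] at hty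
    nlinarith [norm_nonneg (x - y)]
  · rw [abs_of_nonpos (by linarith)] at hty
    have hle : ‖x - y‖ ≤ M := by nlinarith [norm_nonneg (x - y)]
    nlinarith

theorem DeltaC_le_of_forall_mem_unitBallSlice {g : X →L[ℝ] ℝ} {δ r : ℝ} {x : X} (hg : ‖g‖ = 1)
    (hδ : 0 < δ) (hx : x ∈ unitBallSlice g δ) (h : ∀ y ∈ unitBallSlice g δ, ‖x - y‖ ≤ r) :
    DeltaC x ≤ r := by
  unfold DeltaC
  refine le_trans (csInf_le ⟨0, ?_⟩ ⟨g, δ, hg, hδ, hx, rfl⟩) ?_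
  · rintro _ ⟨-, -, -, -, -, rfl⟩
    exact Real.sSup_nonneg (by rintro _ ⟨y, -, rfl⟩; positivity)
  · exact csSup_le ⟨_, mem_image_of_mem _ hx⟩ (by rintro _ ⟨y, hy, rfl⟩; exact h y hy)

theorem unitBallSlice_inv_norm_smul {f : X →L[ℝ] ℝ} (hf : f ≠ 0) (c : ℝ) :
    unitBallSlice (‖f‖⁻¹ • f) (1 - c / ‖f‖) = {y | ‖y‖ ≤ 1 ∧ c < f y} := by
  have hf : 0 < ‖f‖ := norm_pos_iff.mpr hf
  ext y
  simp only [unitBallSlice, mem_ofPred_eq, sub_sub_cancel, smul_apply,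
    smul_eq_mul, ← div_eq_inv_mul, div_lt_div_iff_of_pos_right hf]

theorem DeltaC_le_of_forall_lt_apply {f : X →L[ℝ] ℝ} {x : X} {c r : ℝ} (hf : f ≠ 0)
    (hc : c < ‖f‖) (hx : ‖x‖ ≤ 1) (hcx : c < f x) (h : ∀ y, ‖y‖ ≤ 1 → c < f y → ‖x - y‖ ≤ r) :
    DeltaC x ≤ r := by
  have hf' : 0 < ‖f‖ := norm_pos_iff.mpr hf
  refine DeltaC_le_of_forall_mem_unitBallSlice (g := ‖f‖⁻¹ • f) (δ := 1 - c / ‖f‖) ?_ ?_ ?_ ?_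
  · rw [norm_smul, norm_inv, norm_norm, inv_mul_cancel₀ hf'.ne']
  · rwa [sub_pos, div_lt_one hf']
  · rw [unitBallSlice_inv_norm_smul hf]; exact ⟨hx, hcx⟩
  · rw [unitBallSlice_inv_norm_smul hf]; exact fun y hy => h y hy.1 hy.2

open Topology in
theorem norm_id_sub_rankOneProjection_ge_general (hdim : 2 ≤ Module.rank ℝ X)
    (x : X) (hx : ‖x‖ ≤ 1) (f : X →L[ℝ] ℝ) (hf : f x = 1) :
    DeltaC x ≤ ‖ContinuousLinearMap.id ℝ X - f.smulRight x‖ := by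
  set M := ‖ContinuousLinearMap.id ℝ X - f.smulRight x‖
  have hM : 1 ≤ M := ContinuousLinearMap.one_le_norm_id_sub_smulRight hdim hf
  have hf0 : f ≠ 0 := by rintro rfl; simp at hf
  have hf1 : 1 ≤ ‖f‖ := by
    simpa [hf] using (f.le_opNorm x).trans (mul_le_of_le_one_right (norm_nonneg f) hx)
  have hbound : ∀ c ∈ Ioo (0 : ℝ) 1, DeltaC x ≤ (M + 1 - c) / c := fun c hc =>
    DeltaC_le_of_forall_lt_apply hf0 (by linarith [hc.2]) hx (hf ▸ hc.2)
      fun y hy hcy => norm_sub_le_of_lt_apply hM hc.1 hc.2.le hy hcy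
  have hlim : Tendsto (fun c : ℝ => (M + 1 - c) / c) (𝓝[<] 1) (𝓝 M) := by
    have : ContinuousAt (fun c : ℝ => (M + 1 - c) / c) 1 := by fun_prop (disch := norm_num)
    simpa using tendsto_nhdsWithin_of_tendsto_nhds this.tendsto
  exact ge_of_tendsto hlim (by filter_upwards [Ioo_mem_nhdsLT zero_lt_one] using hbound)

/-- For every rank-one projection `P = x* ⊗ x` with `x*(x) = 1`, `‖Id − P‖ ≥ Δc(x)`. -/
theorem norm_id_sub_rankOneProjection_ge [CompleteSpace X] (hdim : 2 ≤ Module.rank ℝ X)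
    (x : X) (hx : ‖x‖ ≤ 1) (f : X →L[ℝ] ℝ) (hf : f x = 1) :
    DeltaC x ≤ ‖ContinuousLinearMap.id ℝ X - f.smulRight x‖ :=
  norm_id_sub_rankOneProjection_ge_general hdim x hx f hf
end

section
/- Let H be a real Hilbert space with dim(H) ≥ 2 and let x ∈ B_H. Then Δc(x) = √(1 − ‖x‖²). -/
open Set Metric Filter

variable {X : Type*} [NormedAddCommGroup X] [NormedSpace ℝ X]

section aux
open scoped RealInnerProductSpace
variable {H : Type*} [NormedAddCommGroup H] [InnerProductSpace ℝ H]

lemma exists_unit_orthogonal (hdim : 2 ≤ Module.rank ℝ H) (w : H) (hw : ‖w‖ = 1) :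
    ∃ v : H, ‖v‖ = 1 ∧ ⟪w, v⟫ = 0 := by
  obtain ⟨z, hz⟩ : ∃ z : H, z ∉ Submodule.span ℝ {w} := by
    by_contra h
    push_neg at h
    have htop : Submodule.span ℝ ({w} : Set H) = ⊤ := by
      ext z; simp [h z]
    have h1 : Module.rank ℝ H ≤ 1 := by
      have h2 := rank_span_le (R := ℝ) ({w} : Set H)
      rw [htop] at h2
      simpa using h2
    exact absurd (hdim.trans h1) (by norm_num)
  set u := z - ⟪w, z⟫ • w with hu
  have hwu : ⟪w, u⟫ = 0 := by
    simp [hu, inner_sub_right, real_inner_smul_right, real_inner_self_eq_norm_sq, hw]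
  have hune : u ≠ 0 := by
    intro h0
    apply hz
    have hzz : z = ⟪w, z⟫ • w := by rwa [hu, sub_eq_zero] at h0
    rw [hzz]
    exact Submodule.smul_mem _ _ (Submodule.mem_span_singleton_self w)
  refine ⟨‖u‖⁻¹ • u, ?_, ?_⟩
  · rw [norm_smul]
    simp [norm_ne_zero_iff.mpr hune]
  · rw [real_inner_smul_right, hwu, mul_zero]

lemma slice_sup_lower [CompleteSpace H] (hdim : 2 ≤ Module.rank ℝ H) (x : H) (hx : ‖x‖ ≤ 1)
    (f : H →L[ℝ] ℝ) (δ : ℝ) (hf : ‖f‖ = 1) (hxs : x ∈ unitBallSlice f δ) :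
    Real.sqrt (1 - ‖x‖ ^ 2) ≤ sSup ((fun y => ‖x - y‖) '' unitBallSlice f δ) := by
  obtain ⟨w, hfw, hw⟩ : ∃ w : H, (∀ y, f y = ⟪w, y⟫) ∧ ‖w‖ = 1 := by
    refine ⟨(InnerProductSpace.toDual ℝ H).symm f,
      fun y => (InnerProductSpace.toDual_symm_apply (𝕜 := ℝ) (y := f) (x := y)).symm, ?_⟩
    simpa using hf
  obtain ⟨a, hadef⟩ : ∃ a : ℝ, ⟪w, x⟫ = a := ⟨_, rfl⟩
  have ha1 : 1 - δ < a := by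
    have := hxs.2; rwa [hfw, hadef] at this
  have haabs : |a| ≤ ‖x‖ := by
    have := abs_real_inner_le_norm w x
    rwa [hw, one_mul, hadef] at this
  have ha2 : a ^ 2 ≤ ‖x‖ ^ 2 := by nlinarith [abs_nonneg a, sq_abs a, norm_nonneg x]
  have ha3 : a ^ 2 ≤ 1 := ha2.trans (by nlinarith [norm_nonneg x])
  obtain ⟨v, hv, hwv, hxv⟩ : ∃ v : H, ‖v‖ = 1 ∧ ⟪w, v⟫ = 0 ∧ ⟪x, v⟫ ≤ 0 := by
    set u := x - a • w with hu
    have hxu : ⟪x, u⟫ = ‖x‖ ^ 2 - a ^ 2 := by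
      rw [hu, inner_sub_right, real_inner_smul_right, real_inner_self_eq_norm_sq,
        real_inner_comm w x, hadef]
      ring
    by_cases h0 : u = 0
    · obtain ⟨v, hv, hwv⟩ := exists_unit_orthogonal hdim w hw
      refine ⟨v, hv, hwv, ?_⟩
      have hxa : x = a • w := by rwa [hu, sub_eq_zero] at h0
      rw [hxa, real_inner_smul_left, hwv, mul_zero]
    · refine ⟨-(‖u‖⁻¹ • u), ?_, ?_, ?_⟩
      · rw [norm_neg, norm_smul]; simp [norm_ne_zero_iff.mpr h0]
      · rw [inner_neg_right, real_inner_smul_right]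
        have hwu : ⟪w, u⟫ = 0 := by
          rw [hu, inner_sub_right, real_inner_smul_right, real_inner_self_eq_norm_sq, hw,
            hadef]
          ring
        rw [hwu]; ring
      · rw [inner_neg_right, real_inner_smul_right, hxu]
        have h1 : (0:ℝ) ≤ ‖u‖⁻¹ * (‖x‖ ^ 2 - a ^ 2) := by
          apply mul_nonneg (by positivity); linarith
        linarith
  obtain ⟨s, hsdef⟩ : ∃ s : ℝ, Real.sqrt (1 - a ^ 2) = s := ⟨_, rfl⟩
  have hs0 : 0 ≤ s := hsdef ▸ Real.sqrt_nonneg _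
  have hs2 : s ^ 2 = 1 - a ^ 2 := by rw [← hsdef]; exact Real.sq_sqrt (by linarith)
  obtain ⟨y, hy⟩ : ∃ y : H, a • w + s • v = y := ⟨_, rfl⟩
  have hwy : ⟪w, y⟫ = a := by
    rw [← hy, inner_add_right, real_inner_smul_right, real_inner_smul_right,
      real_inner_self_eq_norm_sq, hw, hwv]
    ring
  have hyn : ‖y‖ = 1 := by
    have h1 : ‖y‖ ^ 2 = 1 := by
      rw [← hy, norm_add_sq_real, real_inner_smul_left, real_inner_smul_right, hwv,
        norm_smul, norm_smul, hw, hv]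
      simp only [norm_one, mul_one, mul_zero]
      rw [Real.norm_eq_abs, Real.norm_eq_abs]
      nlinarith [sq_abs a, sq_abs s, abs_nonneg a]
    nlinarith [norm_nonneg y]
  have hyslice : y ∈ unitBallSlice f δ := ⟨le_of_eq hyn, by rw [hfw, hwy]; exact ha1⟩
  have hxy : ⟪x, y⟫ ≤ ‖x‖ ^ 2 := by
    have h1 : ⟪x, y⟫ = a ^ 2 + s * ⟪x, v⟫ := by
      rw [← hy, inner_add_right, real_inner_smul_right, real_inner_smul_right,
        real_inner_comm w x, hadef]
      ring
    nlinarith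
  have hdist : Real.sqrt (1 - ‖x‖ ^ 2) ≤ ‖x - y‖ := by
    have h1 : 1 - ‖x‖ ^ 2 ≤ ‖x - y‖ ^ 2 := by
      rw [norm_sub_sq_real, hyn]
      nlinarith
    calc Real.sqrt (1 - ‖x‖ ^ 2) ≤ Real.sqrt (‖x - y‖ ^ 2) := Real.sqrt_le_sqrt h1
      _ = ‖x - y‖ := Real.sqrt_sq (norm_nonneg _)
  refine hdist.trans (le_csSup ?_ ⟨y, hyslice, rfl⟩)
  refine ⟨‖x‖ + 1, ?_⟩
  rintro r ⟨z, hz, rfl⟩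
  calc ‖x - z‖ ≤ ‖x‖ + ‖z‖ := norm_sub_le x z
    _ ≤ ‖x‖ + 1 := by linarith [hz.1]

lemma slice_sup_upper [CompleteSpace H] (hdim : 2 ≤ Module.rank ℝ H) (x : H) (hx : ‖x‖ ≤ 1)
    (ε : ℝ) (hε : 0 < ε) :
    ∃ (f : H →L[ℝ] ℝ) (δ : ℝ), ‖f‖ = 1 ∧ 0 < δ ∧ x ∈ unitBallSlice f δ ∧
      sSup ((fun y => ‖x - y‖) '' unitBallSlice f δ) ≤ Real.sqrt (1 - ‖x‖ ^ 2) + ε := by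
  obtain ⟨w, hw, hxw⟩ : ∃ w : H, ‖w‖ = 1 ∧ x = ‖x‖ • w := by
    by_cases h0 : x = 0
    · have hnt : Nontrivial H := by
        rcases subsingleton_or_nontrivial H with h | h
        · exfalso
          have h1 : Module.rank ℝ H ≤ 1 := by
            rw [rank_subsingleton' ℝ H]; exact zero_le_one
          exact absurd (hdim.trans h1) (by norm_num)
        · exact h
      obtain ⟨w, hw⟩ := exists_norm_eq H (by norm_num : (0:ℝ) ≤ 1)
      exact ⟨w, hw, by simp [h0]⟩
    · refine ⟨‖x‖⁻¹ • x, ?_, ?_⟩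
      · rw [norm_smul]; simp [norm_ne_zero_iff.mpr h0]
      · rw [smul_smul, mul_inv_cancel₀ (norm_ne_zero_iff.mpr h0), one_smul]
  set η := ε ^ 2 / 2 with hηdef
  have hη : 0 < η := by positivity
  have hwx : (innerSL ℝ w) x = ‖x‖ := by
    simp only [innerSL_apply_apply]
    conv_lhs => rw [hxw]
    rw [real_inner_smul_right, real_inner_self_eq_norm_sq, hw]
    simp
  refine ⟨innerSL ℝ w, 1 - ‖x‖ + η, by simp [hw], by linarith [norm_nonneg x], ?_, ?_⟩
  · exact ⟨hx, by rw [hwx]; linarith⟩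
  · apply csSup_le
    · exact ⟨‖x - x‖, ⟨x, ⟨hx, by rw [hwx]; linarith⟩, rfl⟩⟩
    rintro r ⟨y, hy, rfl⟩
    have hwy : 1 - (1 - ‖x‖ + η) < ⟪w, y⟫ := hy.2
    have hxy : ‖x‖ * (‖x‖ - η) ≤ ⟪x, y⟫ := by
      have h2 : ⟪x, y⟫ = ‖x‖ * ⟪w, y⟫ := by
        conv_lhs => rw [hxw]
        rw [real_inner_smul_left]
      rw [h2]
      have := mul_le_mul_of_nonneg_left (le_of_lt hwy) (norm_nonneg x)
      calc ‖x‖ * (‖x‖ - η) = ‖x‖ * (1 - (1 - ‖x‖ + η)) := by ring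
        _ ≤ ‖x‖ * ⟪w, y⟫ := this
    have hsq : ‖x - y‖ ^ 2 ≤ 1 - ‖x‖ ^ 2 + ε ^ 2 := by
      rw [norm_sub_sq_real]
      have hy1 : ‖y‖ ^ 2 ≤ 1 := by nlinarith [hy.1, norm_nonneg y]
      nlinarith [norm_nonneg x]
    have hrs : ‖x - y‖ ≤ Real.sqrt (1 - ‖x‖ ^ 2 + ε ^ 2) := by
      rw [← Real.sqrt_sq (norm_nonneg (x - y))]
      exact Real.sqrt_le_sqrt hsq
    refine hrs.trans ?_
    have hc : 0 ≤ 1 - ‖x‖ ^ 2 := by nlinarith [norm_nonneg x]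
    have : (1 : ℝ) - ‖x‖ ^ 2 + ε ^ 2 ≤ (Real.sqrt (1 - ‖x‖ ^ 2) + ε) ^ 2 := by
      have h1 := Real.sq_sqrt hc
      nlinarith [Real.sqrt_nonneg (1 - ‖x‖ ^ 2)]
    calc Real.sqrt (1 - ‖x‖ ^ 2 + ε ^ 2) ≤ Real.sqrt ((Real.sqrt (1 - ‖x‖ ^ 2) + ε) ^ 2) :=
        Real.sqrt_le_sqrt this
      _ = Real.sqrt (1 - ‖x‖ ^ 2) + ε := Real.sqrt_sq (by positivity)


theorem deltaConstant_hilbert' {H : Type*} [NormedAddCommGroup H] [InnerProductSpace ℝ H]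
    [CompleteSpace H] (hdim : 2 ≤ Module.rank ℝ H) (x : H) (hx : ‖x‖ ≤ 1) :
    sInf {r | ∃ (f : H →L[ℝ] ℝ) (δ : ℝ), ‖f‖ = 1 ∧ 0 < δ ∧ x ∈ unitBallSlice f δ ∧
      r = sSup ((fun y => ‖x - y‖) '' unitBallSlice f δ)} = Real.sqrt (1 - ‖x‖ ^ 2) := by
  set A := {r | ∃ (f : H →L[ℝ] ℝ) (δ : ℝ), ‖f‖ = 1 ∧ 0 < δ ∧ x ∈ unitBallSlice f δ ∧
      r = sSup ((fun y => ‖x - y‖) '' unitBallSlice f δ)} with hA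
  have hlb : ∀ b ∈ A, Real.sqrt (1 - ‖x‖ ^ 2) ≤ b := by
    rintro b ⟨f, δ, hf, hδ, hxs, rfl⟩
    exact slice_sup_lower hdim x hx f δ hf hxs
  have hne : A.Nonempty := by
    obtain ⟨f, δ, hf, hδ, hxs, -⟩ := slice_sup_upper hdim x hx 1 one_pos
    exact ⟨_, f, δ, hf, hδ, hxs, rfl⟩
  refine le_antisymm ?_ (le_csInf hne hlb)
  refine le_of_forall_pos_le_add ?_
  intro ε hε
  obtain ⟨f, δ, hf, hδ, hxs, hle⟩ := slice_sup_upper hdim x hx ε hε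
  exact le_trans (csInf_le ⟨_, hlb⟩ ⟨f, δ, hf, hδ, hxs, rfl⟩) hle

end aux

/-- In a real Hilbert space of dimension at least 2, `Δc(x) = √(1 − ‖x‖²)` for `x ∈ B_H`. -/
theorem deltaConstant_hilbert {H : Type*} [NormedAddCommGroup H] [InnerProductSpace ℝ H]
    [CompleteSpace H] (hdim : 2 ≤ Module.rank ℝ H) (x : H) (hx : ‖x‖ ≤ 1) :
    DeltaC x = Real.sqrt (1 - ‖x‖ ^ 2) := by
  exact deltaConstant_hilbert' hdim x hx
end

section
/- Let N ∈ ℕ with N ≥ 1 and let ℓ∞^N denote ℝ^N equipped with the supremum norm. For every x = (x_1, …, x_N) ∈ B_{ℓ∞^N}, one has Dc(x) = max{1 − |x_n| : n = 1, …, N}. Moreover, when N = 2, also Δc(x) = max{1 − |x_1|, 1 − |x_2|}. -/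
open Set Metric Filter

variable {X : Type*} [NormedAddCommGroup X] [NormedSpace ℝ X]

namespace DaugavetAux
open Finset

noncomputable def e (N : ℕ) (i : Fin N) : Fin N → ℝ := fun j => if i = j then 1 else 0

lemma apply_eq_sum {N : ℕ} (f : (Fin N → ℝ) →L[ℝ] ℝ) (y : Fin N → ℝ) :
    f y = ∑ i, y i * f (e N i) := by
  conv_lhs => rw [pi_eq_sum_univ y]
  rw [map_sum]
  simp only [map_smul, smul_eq_mul]
  rfl

noncomputable def vtx {N : ℕ} (f : (Fin N → ℝ) →L[ℝ] ℝ) : Fin N → ℝ :=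
  fun n => if 0 ≤ f (e N n) then 1 else -1

lemma abs_vtx {N : ℕ} (f : (Fin N → ℝ) →L[ℝ] ℝ) (n : Fin N) : |vtx f n| = 1 := by
  unfold vtx; split <;> simp

lemma opNorm_le_sum {N : ℕ} (f : (Fin N → ℝ) →L[ℝ] ℝ) : ‖f‖ ≤ ∑ i, |f (e N i)| := by
  refine f.opNorm_le_bound (Finset.sum_nonneg fun i _ => abs_nonneg _) fun y => ?_
  rw [apply_eq_sum f y, Real.norm_eq_abs]
  calc |∑ i, y i * f (e N i)| ≤ ∑ i, |y i * f (e N i)| := Finset.abs_sum_le_sum_abs _ _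
    _ ≤ ∑ i, ‖y‖ * |f (e N i)| := Finset.sum_le_sum fun i _ => by
        rw [abs_mul]
        exact mul_le_mul_of_nonneg_right (by simpa using norm_le_pi_norm y i) (abs_nonneg _)
    _ = (∑ i, |f (e N i)|) * ‖y‖ := by rw [← Finset.mul_sum]; ring

lemma vtx_mem {N : ℕ} (f : (Fin N → ℝ) →L[ℝ] ℝ) (hf : ‖f‖ = 1) {δ : ℝ} (hδ : 0 < δ) :
    vtx f ∈ unitBallSlice f δ := by
  have h1 : f (vtx f) = ∑ i, |f (e N i)| := by
    rw [apply_eq_sum f (vtx f)]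
    refine Finset.sum_congr rfl fun i _ => ?_
    unfold vtx
    rcases le_or_gt 0 (f (e N i)) with h | h
    · rw [if_pos h, one_mul, abs_of_nonneg h]
    · rw [if_neg (not_le.2 h), abs_of_neg h]; ring
  have h2 := opNorm_le_sum f
  constructor
  · refine (pi_norm_le_iff_of_nonneg zero_le_one).2 fun n => ?_
    rw [Real.norm_eq_abs, abs_vtx]
  · rw [h1]; linarith [hf ▸ h2]

lemma dist_vtx_ge {N : ℕ} (x : Fin N → ℝ) (f : (Fin N → ℝ) →L[ℝ] ℝ) (n : Fin N) :
    1 - |x n| ≤ ‖x - vtx f‖ := by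
  have h1 := abs_vtx f n
  have h2 := abs_sub_abs_le_abs_sub (vtx f n) (x n)
  have h3 := norm_le_pi_norm (x - vtx f) n
  rw [Real.norm_eq_abs, Pi.sub_apply, abs_sub_comm] at h3
  linarith

open Finset

variable {N : ℕ}

noncomputable def sg (x : Fin N → ℝ) : Fin N → ℝ := fun n => if 0 ≤ x n then 1 else -1

lemma abs_sg (x : Fin N → ℝ) (n : Fin N) : |sg x n| = 1 := by unfold sg; split <;> simp

lemma sg_mul_self (x : Fin N → ℝ) (n : Fin N) : sg x n * x n = |x n| := by
  unfold sg
  rcases le_or_gt 0 (x n) with h | h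
  · rw [if_pos h, one_mul, abs_of_nonneg h]
  · rw [if_neg (not_le.2 h), abs_of_neg h]; ring

lemma norm_sg_le (x : Fin N → ℝ) : ‖sg x‖ ≤ 1 :=
  (pi_norm_le_iff_of_nonneg zero_le_one).2 fun n => by rw [Real.norm_eq_abs, abs_sg]

noncomputable def favg (x : Fin N → ℝ) : (Fin N → ℝ) →L[ℝ] ℝ :=
  ∑ n, ((N : ℝ)⁻¹ * sg x n) • ContinuousLinearMap.proj n

lemma favg_apply (x y : Fin N → ℝ) : favg x y = ∑ n, (N : ℝ)⁻¹ * (sg x n * y n) := by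
  simp [favg, ContinuousLinearMap.sum_apply, mul_assoc]

lemma favg_sg (hN : 0 < N) (x : Fin N → ℝ) : favg x (sg x) = 1 := by
  rw [favg_apply]
  have : ∀ n ∈ Finset.univ, (N : ℝ)⁻¹ * (sg x n * sg x n) = (N : ℝ)⁻¹ := by
    intro n _
    have : sg x n * sg x n = 1 := by unfold sg; split <;> norm_num
    rw [this, mul_one]
  rw [Finset.sum_congr rfl this, Finset.sum_const, card_univ, Fintype.card_fin,
    nsmul_eq_mul, mul_inv_cancel₀ (by exact_mod_cast hN.ne')]

lemma norm_favg (hN : 0 < N) (x : Fin N → ℝ) : ‖favg x‖ = 1 := by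
  refine le_antisymm (ContinuousLinearMap.opNorm_le_bound _ zero_le_one fun y => ?_) ?_
  · rw [favg_apply, Real.norm_eq_abs, one_mul]
    calc |∑ n, (N : ℝ)⁻¹ * (sg x n * y n)| ≤ ∑ n, |(N : ℝ)⁻¹ * (sg x n * y n)| :=
          Finset.abs_sum_le_sum_abs _ _
      _ ≤ ∑ n : Fin N, (N : ℝ)⁻¹ * ‖y‖ := by
          refine Finset.sum_le_sum fun n _ => ?_
          rw [abs_mul, abs_mul, abs_sg, one_mul, abs_of_nonneg (by positivity : (0:ℝ) ≤ (N:ℝ)⁻¹)]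
          exact mul_le_mul_of_nonneg_left (by simpa using norm_le_pi_norm y n) (by positivity)
      _ = ‖y‖ := by
          rw [Finset.sum_const, card_univ, Fintype.card_fin, nsmul_eq_mul, ← mul_assoc,
            mul_inv_cancel₀ (by exact_mod_cast hN.ne' : (N:ℝ) ≠ 0), one_mul]
  · have h := (favg x).le_opNorm (sg x)
    rw [favg_sg hN x, Real.norm_eq_abs, abs_one] at h
    calc (1:ℝ) ≤ ‖favg x‖ * ‖sg x‖ := h
      _ ≤ ‖favg x‖ * 1 := mul_le_mul_of_nonneg_left (norm_sg_le x) (norm_nonneg _)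
      _ = ‖favg x‖ := mul_one _

lemma slice_coord (hN : 0 < N) {x y : Fin N → ℝ} {δ : ℝ}
    (hy1 : ‖y‖ ≤ 1) (hy2 : 1 - δ < favg x y) (n : Fin N) :
    1 - N * δ < sg x n * y n := by
  have hterm : ∀ m, sg x m * y m ≤ 1 := by
    intro m
    calc sg x m * y m ≤ |sg x m * y m| := le_abs_self _
      _ = |y m| := by rw [abs_mul, abs_sg, one_mul]
      _ ≤ 1 := by simpa using (norm_le_pi_norm y m).trans hy1
  have hsum : (N : ℝ) * (1 - δ) < ∑ m, sg x m * y m := by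
    rw [favg_apply, ← Finset.mul_sum] at hy2
    have hNpos : (0:ℝ) < (N:ℝ) := by exact_mod_cast hN
    calc (N : ℝ) * (1 - δ) < (N : ℝ) * ((N : ℝ)⁻¹ * ∑ m, sg x m * y m) := by
          exact mul_lt_mul_of_pos_left hy2 hNpos
      _ = ∑ m, sg x m * y m := by
          rw [← mul_assoc, mul_inv_cancel₀ hNpos.ne', one_mul]
  have hrest : ∑ m ∈ univ.erase n, sg x m * y m ≤ (N : ℝ) - 1 := by
    calc ∑ m ∈ univ.erase n, sg x m * y m ≤ (univ.erase n).card • (1:ℝ) :=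
          Finset.sum_le_card_nsmul _ _ 1 fun m _ => hterm m
      _ = ((N - 1 : ℕ) : ℝ) := by
          rw [card_erase_of_mem (mem_univ n), card_univ, Fintype.card_fin, nsmul_eq_mul, mul_one]
      _ = (N : ℝ) - 1 := by
          rw [Nat.cast_sub hN, Nat.cast_one]
  have hsplit : ∑ m ∈ univ.erase n, sg x m * y m + sg x n * y n = ∑ m, sg x m * y m :=
    Finset.sum_erase_add univ (fun m => sg x m * y m) (mem_univ n)
  nlinarith [hsum, hrest]

lemma coord_bound {x y : Fin N → ℝ} {c : ℝ} (n : Fin N)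
    (hy : |y n| ≤ 1) (h : 1 - c < sg x n * y n) :
    |x n - y n| ≤ max (1 - |x n|) (c - (1 - |x n|)) := by
  have h1 : |x n - y n| = |(|x n|) - sg x n * y n| := by
    rw [← sg_mul_self x n, ← mul_sub (sg x n), abs_mul, abs_sg, one_mul]
  have h2 : sg x n * y n ≤ 1 := by
    calc sg x n * y n ≤ |sg x n * y n| := le_abs_self _
      _ = |y n| := by rw [abs_mul, abs_sg, one_mul]
      _ ≤ 1 := hy
  rw [h1, abs_sub_le_iff]
  constructor
  · exact le_trans (by linarith) (le_max_right _ _)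
  · exact le_trans (by linarith) (le_max_left _ _)


end DaugavetAux

open DaugavetAux in
/-- In `ℓ∞^N` (i.e. `ℝ^N` with the sup norm), `Dc(x) = max_n (1 − |x_n|)`; moreover for
`N = 2` also `Δc(x) = max (1 − |x 0|) (1 − |x 1|)`. -/
theorem daugavetConstant_linftyN :
    (∀ (N : ℕ), 0 < N → ∀ x : Fin N → ℝ, ‖x‖ ≤ 1 →
        Dc x = ⨆ n : Fin N, (1 - |x n|)) ∧
    (∀ x : Fin 2 → ℝ, ‖x‖ ≤ 1 → DeltaC x = max (1 - |x 0|) (1 - |x 1|)) := by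
  constructor
  · -- Part 1: the Daugavet constant
    intro N hN x hx
    haveI : Nonempty (Fin N) := Fin.pos_iff_nonempty.1 hN
    have hxn : ∀ n, |x n| ≤ 1 := fun n => by
      simpa using (norm_le_pi_norm x n).trans hx
    set M := ⨆ n : Fin N, (1 - |x n|) with hM
    have hMn : ∀ n, 1 - |x n| ≤ M := by
      intro n
      rw [hM]
      exact le_ciSup (f := fun m : Fin N => 1 - |x m|) (Finite.bddAbove_range _) n
    have hM0 : 0 ≤ M := by
      obtain ⟨n⟩ := ‹Nonempty (Fin N)›
      linarith [hxn n, hMn n]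
    have hbddA : ∀ (f : (Fin N → ℝ) →L[ℝ] ℝ) (δ : ℝ),
        BddAbove ((fun y => ‖x - y‖) '' unitBallSlice f δ) := by
      intro f δ
      refine ⟨‖x‖ + 1, ?_⟩
      rintro r ⟨y, hy, rfl⟩
      exact (norm_sub_le _ _).trans (by linarith [hy.1])
    have hlow : ∀ (f : (Fin N → ℝ) →L[ℝ] ℝ) (δ : ℝ), ‖f‖ = 1 → 0 < δ →
        M ≤ sSup ((fun y => ‖x - y‖) '' unitBallSlice f δ) := by
      intro f δ hf hδ
      rw [hM]
      refine ciSup_le fun n => (dist_vtx_ge x f n).trans ?_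
      exact le_csSup (hbddA f δ) ⟨_, vtx_mem f hf hδ, rfl⟩
    have hbddB : BddBelow {r | ∃ (f : (Fin N → ℝ) →L[ℝ] ℝ) (δ : ℝ), ‖f‖ = 1 ∧ 0 < δ ∧
        r = sSup ((fun y => ‖x - y‖) '' unitBallSlice f δ)} := by
      refine ⟨0, ?_⟩
      rintro r ⟨f, δ, hf, hδ, rfl⟩
      exact hM0.trans (hlow f δ hf hδ)
    have hupper : ∀ δ : ℝ, 0 < δ →
        sSup ((fun y => ‖x - y‖) '' unitBallSlice (favg x) δ) ≤ M + N * δ := by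
      intro δ hδ
      have hNδ : 0 < (N : ℝ) * δ := by
        have : (0:ℝ) < (N:ℝ) := by exact_mod_cast hN
        positivity
      refine csSup_le ⟨_, ⟨_, vtx_mem _ (norm_favg hN x) hδ, rfl⟩⟩ ?_
      rintro r ⟨y, hy, rfl⟩
      refine (pi_norm_le_iff_of_nonneg (by linarith)).2 fun n => ?_
      rw [Real.norm_eq_abs, Pi.sub_apply]
      have hyn : |y n| ≤ 1 := by simpa using (norm_le_pi_norm y n).trans hy.1
      have h := coord_bound n hyn (slice_coord hN hy.1 hy.2 n)
      refine h.trans (max_le (by linarith [hMn n]) (by linarith [hMn n, hxn n]))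
    rw [Dc]
    refine le_antisymm (le_of_forall_pos_le_add fun ε hε => ?_) ?_
    · have hδ : 0 < ε / N := by
        have : (0:ℝ) < (N:ℝ) := by exact_mod_cast hN
        positivity
      have h1 := csInf_le hbddB ⟨favg x, ε / N, norm_favg hN x, hδ, rfl⟩
      have h2 := hupper (ε / N) hδ
      have h3 : (N : ℝ) * (ε / N) = ε := by
        field_simp
      linarith
    · refine le_csInf ⟨_, favg x, 1, norm_favg hN x, one_pos, rfl⟩ ?_
      rintro r ⟨f, δ, hf, hδ, rfl⟩
      exact hlow f δ hf hδ
  · -- Part 2: the Δ-constant in dimension 2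
    intro x hx
    have hxn : ∀ n, |x n| ≤ 1 := fun n => by
      simpa using (norm_le_pi_norm x n).trans hx
    set M := max (1 - |x 0|) (1 - |x 1|) with hM
    have hMa : 1 - |x 0| ≤ M := le_max_left _ _
    have hMb : 1 - |x 1| ≤ M := le_max_right _ _
    have hM0 : 0 ≤ M := by linarith [hxn 0]
    have hbddA : ∀ (f : (Fin 2 → ℝ) →L[ℝ] ℝ) (δ : ℝ),
        BddAbove ((fun y => ‖x - y‖) '' unitBallSlice f δ) := by
      intro f δ
      refine ⟨‖x‖ + 1, ?_⟩
      rintro r ⟨y, hy, rfl⟩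
      exact (norm_sub_le _ _).trans (by linarith [hy.1])
    have hlow : ∀ (f : (Fin 2 → ℝ) →L[ℝ] ℝ) (δ : ℝ), ‖f‖ = 1 → 0 < δ →
        M ≤ sSup ((fun y => ‖x - y‖) '' unitBallSlice f δ) := by
      intro f δ hf hδ
      rw [hM]
      refine max_le ?_ ?_ <;>
        exact (dist_vtx_ge x f _).trans (le_csSup (hbddA f δ) ⟨_, vtx_mem f hf hδ, rfl⟩)
    have hbddB : BddBelow {r | ∃ (f : (Fin 2 → ℝ) →L[ℝ] ℝ) (δ : ℝ), ‖f‖ = 1 ∧ 0 < δ ∧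
        x ∈ unitBallSlice f δ ∧
        r = sSup ((fun y => ‖x - y‖) '' unitBallSlice f δ)} := by
      refine ⟨0, ?_⟩
      rintro r ⟨f, δ, hf, hδ, _, rfl⟩
      exact hM0.trans (hlow f δ hf hδ)
    have h2pos : 0 < 2 := Nat.zero_lt_two
    have hfx : favg x x = 2⁻¹ * (|x 0| + |x 1|) := by
      rw [favg_apply, Fin.sum_univ_two, sg_mul_self, sg_mul_self]
      push_cast
      ring
    have hmem : ∀ δ : ℝ, (1 - |x 0|) + (1 - |x 1|) < 2 * δ →
        x ∈ unitBallSlice (favg x) δ := by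
      intro δ h
      exact ⟨hx, by rw [hfx]; linarith⟩
    rw [DeltaC]
    refine le_antisymm (le_of_forall_pos_le_add fun ε hε => ?_) ?_
    · set δ := ((1 - |x 0|) + (1 - |x 1|)) / 2 + ε / 4 with hδdef
      have hδ : 0 < δ := by
        have h0 : 0 ≤ 1 - |x 0| := by linarith [hxn 0]
        have h1 : 0 ≤ 1 - |x 1| := by linarith [hxn 1]
        rw [hδdef]; positivity
      have hxin : x ∈ unitBallSlice (favg x) δ := hmem δ (by rw [hδdef]; linarith)
      have hcoord : ∀ n : Fin 2, max (1 - |x n|) (2 * δ - (1 - |x n|)) ≤ M + ε := by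
        rw [Fin.forall_fin_two]
        constructor
        · refine max_le (by linarith) ?_
          rw [hδdef]; linarith
        · refine max_le (by linarith) ?_
          rw [hδdef]; linarith
      have h1 := csInf_le hbddB ⟨favg x, δ, norm_favg h2pos x, hδ, hxin, rfl⟩
      refine h1.trans ?_
      refine csSup_le ⟨_, ⟨x, hxin, rfl⟩⟩ ?_
      rintro r ⟨y, hy, rfl⟩
      refine (pi_norm_le_iff_of_nonneg (by linarith)).2 fun n => ?_
      rw [Real.norm_eq_abs, Pi.sub_apply]
      have hyn : |y n| ≤ 1 := by simpa using (norm_le_pi_norm y n).trans hy.1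
      have hc := slice_coord h2pos hy.1 hy.2 n
      have hc' : 1 - 2 * δ < sg x n * y n := by
        have : ((2:ℕ):ℝ) = 2 := by norm_num
        rwa [this] at hc
      exact (coord_bound n hyn hc').trans (hcoord n)
    · refine le_csInf ⟨_, favg x, 2, norm_favg h2pos x, two_pos,
        hmem 2 (by linarith [abs_nonneg (x 0), abs_nonneg (x 1)]), rfl⟩ ?_
      rintro r ⟨f, δ, hf, hδ, _, rfl⟩
      exact hlow f δ hf hδ
end

section
/- Let ℓ∞ denote the real Banach space of bounded real sequences with the supremum norm, regarded as the dual of ℓ₁. For every x = (x_n) ∈ B_{ℓ∞}, the weak* Daugavet constant of x satisfies wDc(x) = 1 + limsup_n |x_n|. -/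
open Set Metric Filter ENNReal

variable {X : Type*} [NormedAddCommGroup X] [NormedSpace ℝ X]

/-- The weak* Daugavet constant of a point of `B_{ℓ∞}`, where `ℓ∞ = ℓ₁*`: the infimum over
all weak* slices (slices of `B_{ℓ∞}` given by norm-one elements of `ℓ₁`) of the supremum of
distances from `x` to points of the slice. -/
noncomputable def wDc (x : lp (fun _ : ℕ => ℝ) ∞) : ℝ :=
  sInf {r | ∃ (y : lp (fun _ : ℕ => ℝ) 1) (δ : ℝ), ‖y‖ = 1 ∧ 0 < δ ∧
    r = sSup ((fun z => ‖x - z‖) ''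
      {z : lp (fun _ : ℕ => ℝ) ∞ | ‖z‖ ≤ 1 ∧ 1 - δ < ∑' j, y j * z j})}

/-!
Write `L = limsup |xₙ|`. Up to `δ`, a weak* slice `S(y, δ)` only sees finitely many coordinates,
those carrying almost all of the mass of `y`; beyond them a point `z` of the slice is free, and
`zₙ = -sign xₙ` gives `‖x - z‖ ≥ 1 + |xₙ|` for all large `n`, so every slice contains points at
distance at least `1 + L` from `x`. Conversely, for `y = (sign x₀, …, sign x_{N-1}, 0, …) / N` and `δ = ε / N`,
each of the first `N` coordinates of a point `z` of the slice is within `ε` of `sign xₙ`, so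
`|xₙ - zₙ| ≤ 1 + ε` there (as `|xₙ| ≤ 1`), while `|xₙ - zₙ| ≤ |xₙ| + 1 ≤ L + ε + 1` beyond `N`
once `N` is large.
-/

local notation "ℓ₁" => lp (fun _ : ℕ => ℝ) 1
local notation "ℓ∞" => lp (fun _ : ℕ => ℝ) ∞

/-- Unlike `Real.sign`, this sign is `1` (not `0`) at `0`, so it always has absolute value `1`. -/
noncomputable def unitSign (t : ℝ) : ℝ := if 0 ≤ t then 1 else -1

lemma abs_unitSign (t : ℝ) : |unitSign t| = 1 := by
  unfold unitSign; split_ifs <;> simp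

lemma mul_unitSign (t : ℝ) : t * unitSign t = |t| := by
  unfold unitSign; split_ifs with h
  · rw [mul_one, abs_of_nonneg h]
  · rw [mul_neg_one, abs_of_neg (not_le.1 h)]

lemma abs_add_unitSign (t : ℝ) : |t + unitSign t| = 1 + |t| := by
  unfold unitSign; split_ifs with h
  · rw [abs_of_nonneg h, abs_of_nonneg (by linarith)]; ring
  · rw [abs_of_neg (not_le.1 h), abs_of_neg (by linarith)]; ring

lemma abs_sub_le_two_sub_unitSign_mul {a b : ℝ} (ha : |a| ≤ 1) (hb : |b| ≤ 1) :
    |a - b| ≤ 2 - unitSign a * b := by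
  rw [abs_le] at ha hb ⊢
  unfold unitSign; split_ifs <;> constructor <;> linarith

lemma abs_sub_mul_nonneg (a : ℝ) {b : ℝ} (hb : |b| ≤ 1) : 0 ≤ |a| - a * b := by
  have := abs_mul a b ▸ le_abs_self (a * b)
  nlinarith [abs_nonneg a]

lemma abs_apply_le_norm (z : ℓ∞) (j : ℕ) : |z j| ≤ ‖z‖ :=
  lp.norm_apply_le_norm ENNReal.top_ne_zero z j

lemma hasSum_abs (y : ℓ₁) : HasSum (fun j => |y j|) ‖y‖ := by
  simpa using lp.hasSum_norm (p := 1) (by norm_num) y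

lemma summable_mul (y : ℓ₁) (z : ℓ∞) : Summable fun j => y j * z j :=
  .of_norm_bounded ((hasSum_abs y).summable.mul_right ‖z‖) fun j => by
    rw [Real.norm_eq_abs, abs_mul]
    exact mul_le_mul_of_nonneg_left (abs_apply_le_norm z j) (abs_nonneg _)

lemma hasSum_abs_sub_mul (y : ℓ₁) (z : ℓ∞) :
    HasSum (fun j => |y j| - y j * z j) (‖y‖ - ∑' j, y j * z j) :=
  (hasSum_abs y).sub (summable_mul y z).hasSum

def weakStarSlice (y : ℓ₁) (δ : ℝ) : Set ℓ∞ :=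
  {z | ‖z‖ ≤ 1 ∧ 1 - δ < ∑' j, y j * z j}

lemma abs_sub_mul_lt_of_mem_weakStarSlice {y : ℓ₁} (hy : ‖y‖ = 1) {δ : ℝ} {z : ℓ∞}
    (hz : z ∈ weakStarSlice y δ) (j : ℕ) : |y j| - y j * z j < δ := by
  have hle := le_hasSum (hasSum_abs_sub_mul y z) j fun i _ =>
    abs_sub_mul_nonneg _ ((abs_apply_le_norm z i).trans hz.1)
  linarith [hz.2]

lemma norm_sub_tsum_mul_le_two_mul_tail (y : ℓ₁) {z : ℓ∞} (hz : ‖z‖ ≤ 1) (N : ℕ)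
    (hsign : ∀ j < N, z j = unitSign (y j)) :
    ‖y‖ - ∑' j, y j * z j ≤ 2 * ∑' i, |y (i + N)| := by
  have hz' : ∀ j, |z j| ≤ 1 := fun j => (abs_apply_le_norm z j).trans hz
  have hsum := hasSum_abs_sub_mul y z
  have hhead : ∑ j ∈ Finset.range N, (|y j| - y j * z j) = 0 :=
    Finset.sum_eq_zero fun j hj => by
      rw [hsign j (Finset.mem_range.1 hj), mul_unitSign, sub_self]
  rw [← hsum.tsum_eq, ← hsum.summable.sum_add_tsum_nat_add N, hhead, zero_add,
    ← tsum_mul_left]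
  refine Summable.tsum_le_tsum (fun i => ?_) ((summable_nat_add_iff N).2 hsum.summable)
    (((summable_nat_add_iff N).2 (hasSum_abs y).summable).mul_left 2)
  have := abs_mul (y (i + N)) (z (i + N)) ▸ neg_abs_le (y (i + N) * z (i + N))
  nlinarith [hz' (i + N), abs_nonneg (y (i + N))]

noncomputable def signVector (s : ℕ → ℝ) : ℓ∞ :=
  ⟨fun j => unitSign (s j), memℓp_infty ⟨1, by rintro _ ⟨j, rfl⟩; simp [abs_unitSign]⟩⟩

lemma signVector_apply (s : ℕ → ℝ) (j : ℕ) : signVector s j = unitSign (s j) := rfl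

lemma norm_signVector_le (s : ℕ → ℝ) : ‖signVector s‖ ≤ 1 :=
  lp.norm_le_of_forall_le zero_le_one fun j => by
    rw [Real.norm_eq_abs, signVector_apply, abs_unitSign]

theorem exists_mem_weakStarSlice_one_add_limsup_le (x : ℓ∞) {y : ℓ₁} (hy : ‖y‖ = 1) {δ : ℝ}
    (hδ : 0 < δ) : ∃ z ∈ weakStarSlice y δ, 1 + limsup (fun j => |x j|) atTop ≤ ‖x - z‖ := by
  obtain ⟨N, hN⟩ : ∃ N, 2 * ∑' i, |y (i + N)| < δ := by
    have := (tendsto_sum_nat_add fun i => |y i|).const_mul 2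
    rw [mul_zero] at this
    exact (this.eventually (gt_mem_nhds hδ)).exists
  set z := signVector fun j => if j < N then y j else -x j
  refine ⟨z, ⟨norm_signVector_le _, ?_⟩, ?_⟩
  · have := norm_sub_tsum_mul_le_two_mul_tail y (z := z) (norm_signVector_le _) N fun j hj => by
      simp only [z, signVector_apply, if_pos hj]
    linarith
  · have htail : ∀ j ≥ N, |x j| ≤ ‖x - z‖ - 1 := fun j hj => by
      have hzj : x j - z j = -(-x j + unitSign (-x j)) := by
        simp only [z, signVector_apply, if_neg (not_lt.2 hj)]; ring
      have := abs_apply_le_norm (x - z) j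
      rw [lp.coeFn_sub, Pi.sub_apply, hzj, abs_neg, abs_add_unitSign, abs_neg] at this
      linarith
    have := limsup_le_of_le (isCoboundedUnder_le_of_le atTop fun j => abs_nonneg (x j))
      (eventually_atTop.2 ⟨N, htail⟩)
    linarith

noncomputable def headSignAverage (s : ℕ → ℝ) (N : ℕ) : ℓ₁ :=
  ⟨fun j => if j < N then unitSign (s j) / N else 0,
    memℓp_gen (summable_of_ne_finset_zero (s := Finset.range N) fun j hj => by
      simp [Finset.mem_range.not.1 hj])⟩

lemma headSignAverage_apply (s : ℕ → ℝ) (N j : ℕ) :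
    headSignAverage s N j = if j < N then unitSign (s j) / N else 0 := rfl

lemma norm_headSignAverage (s : ℕ → ℝ) {N : ℕ} (hN : 0 < N) : ‖headSignAverage s N‖ = 1 := by
  rw [← (hasSum_abs _).tsum_eq, tsum_eq_sum (s := Finset.range N) fun j hj => by
    simp [headSignAverage_apply, Finset.mem_range.not.1 hj]]
  rw [Finset.sum_congr rfl fun j hj => by
    rw [headSignAverage_apply, if_pos (Finset.mem_range.1 hj), abs_div, abs_unitSign,
      Nat.abs_cast]]
  simp [hN.ne']

theorem norm_sub_le_of_mem_weakStarSlice_headSignAverage {x : ℓ∞} (hx : ‖x‖ ≤ 1) {N : ℕ}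
    (hN : 0 < N) {c : ℝ} (hc : ∀ j ≥ N, |x j| ≤ c) {ε : ℝ} {z : ℓ∞}
    (hz : z ∈ weakStarSlice (headSignAverage x N) (ε / N)) : ‖x - z‖ ≤ 1 + max ε c := by
  have hz' : ∀ j, |z j| ≤ 1 := fun j => (abs_apply_le_norm z j).trans hz.1
  have hNpos : (0 : ℝ) < N := Nat.cast_pos.2 hN
  refine lp.norm_le_of_forall_le (by linarith [abs_nonneg (x N), hc N le_rfl, le_max_right ε c])
    fun j => ?_
  rw [Real.norm_eq_abs, lp.coeFn_sub, Pi.sub_apply]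
  by_cases hj : j < N
  · have hclose := abs_sub_mul_lt_of_mem_weakStarSlice (norm_headSignAverage x hN) hz j
    rw [headSignAverage_apply, if_pos hj, abs_div, abs_unitSign, Nat.abs_cast,
      div_mul_eq_mul_div, ← sub_div, div_lt_div_iff_of_pos_right hNpos] at hclose
    linarith [abs_sub_le_two_sub_unitSign_mul ((abs_apply_le_norm x j).trans hx) (hz' j),
      le_max_left ε c]
  · linarith [abs_sub (x j) (z j), hc j (not_lt.1 hj), hz' j, le_max_right ε c]

/-- For every `x ∈ B_{ℓ∞}`, the weak* Daugavet constant equals `1 + limsup_n |x_n|`. -/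
theorem weakStarDaugavetConstant_linfty (x : lp (fun _ : ℕ => ℝ) ∞) (hx : ‖x‖ ≤ 1) :
    wDc x = 1 + Filter.limsup (fun j => |x j|) Filter.atTop := by
  refine csInf_eq_of_forall_ge_of_forall_gt_exists_lt
    ⟨_, headSignAverage x 1, 1, norm_headSignAverage x one_pos, one_pos, rfl⟩ ?_ fun w hw => ?_
  · rintro _ ⟨y, δ, hy, hδ, rfl⟩
    obtain ⟨z, hz, hle⟩ := exists_mem_weakStarSlice_one_add_limsup_le x hy hδ
    have hbdd : BddAbove ((fun z => ‖x - z‖) '' weakStarSlice y δ) := ⟨‖x‖ + 1, by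
      rintro _ ⟨z', hz', rfl⟩
      linarith [norm_sub_le x z', hz'.1]⟩
    exact le_csSup_of_le hbdd ⟨z, hz, rfl⟩ hle
  · set L := limsup (fun j => |x j|) atTop
    have hbdd : IsBoundedUnder (· ≤ ·) atTop fun j => |x j| :=
      isBoundedUnder_of ⟨‖x‖, abs_apply_le_norm x⟩
    have hL : 0 ≤ L := le_limsup_of_frequently_le (.of_forall fun j => abs_nonneg (x j)) hbdd
    obtain ⟨ε, hε, hεw⟩ : ∃ ε > 0, 1 + L + ε < w :=
      ⟨(w - (1 + L)) / 2, by linarith, by linarith⟩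
    obtain ⟨N, hN⟩ :=
      eventually_atTop.1 (eventually_lt_of_limsup_lt (lt_add_of_pos_right L hε) hbdd)
    refine ⟨_, ⟨headSignAverage x (N + 1), ε / (N + 1 : ℕ), norm_headSignAverage x N.succ_pos,
      by positivity, rfl⟩, (Real.sSup_le (a := 1 + max ε (L + ε)) ?_ (by positivity)).trans_lt ?_⟩
    · rintro _ ⟨z, hz, rfl⟩
      exact norm_sub_le_of_mem_weakStarSlice_headSignAverage hx N.succ_pos
        (fun j hj => (hN j (by omega)).le) hz
    · rwa [max_eq_right (by linarith), ← add_assoc]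
end

section
/- Let X be a real Banach space and x ∈ S_X. Suppose there exists ε > 0 such that the set {e* ∈ ext(B_{X*}) : |e*(x)| > 1 − ε} of extreme points of the dual unit ball is finite. Then Δc(x) ≤ 1 + sup{ |e*(x)| : e* ∈ ext(B_{X*}), |e*(x)| < 1 }. -/
/-! Only finitely many extreme functionals `g₁, …, gₙ` of the dual ball satisfy `gᵢ x = 1`, and
there is at least one. Their average `f` has norm one and `f x = 1`, and on the slice `S(f, 1/n)`
every `gᵢ` is positive. For `y` in that slice, the Bauer maximum principle on the weak* compact dual
ball gives an extreme `g` with `g (x - y) = ‖x - y‖`, and `g x - g y` is below `1` if `g x = 1`,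
below `0` if `g x = -1`, and at most `|g x| + 1` otherwise. -/

open Set Metric Filter

variable {X : Type*} [NormedAddCommGroup X] [NormedSpace ℝ X]

/-- **Bauer maximum principle** for continuous linear functionals. -/
theorem IsCompact.exists_mem_extremePoints_isMaxOn {E : Type*} [AddCommGroup E] [Module ℝ E]
    [TopologicalSpace E] [T2Space E] [IsTopologicalAddGroup E] [ContinuousSMul ℝ E]
    [LocallyConvexSpace ℝ E] {s : Set E} (hs : IsCompact s) (hne : s.Nonempty)
    (l : StrongDual ℝ E) : ∃ e ∈ s.extremePoints ℝ, IsMaxOn l s e := by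
  obtain ⟨z, hz, hmax⟩ := hs.exists_isMaxOn hne l.continuous.continuousOn
  have hexp : IsExposed ℝ s {y ∈ s | ∀ w ∈ s, l w ≤ l y} := fun _ => ⟨l, rfl⟩
  obtain ⟨e, he⟩ := (hexp.isCompact hs).extremePoints_nonempty ⟨z, hz, hmax⟩
  exact ⟨e, hexp.isExtreme.extremePoints_subset_extremePoints he, he.1.2⟩

theorem abs_apply_le_norm_of_mem_closedBall {g : StrongDual ℝ X}
    (hg : g ∈ closedBall (0 : StrongDual ℝ X) 1) (z : X) : |g z| ≤ ‖z‖ := by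
  simpa using g.le_of_opNorm_le (mem_closedBall_zero_iff.mp hg) z

theorem apply_le_norm_of_mem_closedBall {g : StrongDual ℝ X}
    (hg : g ∈ closedBall (0 : StrongDual ℝ X) 1) (z : X) : g z ≤ ‖z‖ :=
  (le_abs_self _).trans (abs_apply_le_norm_of_mem_closedBall hg z)

theorem exists_mem_extremePoints_closedBall_dual_apply_eq_norm (z : X) :
    ∃ g ∈ extremePoints ℝ (closedBall (0 : StrongDual ℝ X) 1), g z = ‖z‖ := by
  have : LocallyConvexSpace ℝ (WeakDual ℝ X) := WeakBilin.locallyConvexSpace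
  have hK : IsCompact (StrongDual.toWeakDual '' closedBall 0 1 : Set (WeakDual ℝ X)) := by
    rw [StrongDual.toWeakDual.image_eq_preimage_symm]
    exact WeakDual.isCompact_closedBall 0 1
  have hKne : (StrongDual.toWeakDual '' closedBall 0 1 : Set (WeakDual ℝ X)).Nonempty :=
    (nonempty_closedBall.mpr zero_le_one).image _
  -- `show` makes the module structure that of `WeakDual` rather than `WeakBilin`, which instance
  -- search needs to find `ContinuousSMul ℝ (WeakDual ℝ X)`.
  obtain ⟨e, he, hmax⟩ := hK.exists_mem_extremePoints_isMaxOn hKne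
    (show StrongDual ℝ (WeakDual ℝ X) from WeakBilin.eval _ z)
  rw [← image_extremePoints] at he
  obtain ⟨g, hg, rfl⟩ := he
  obtain ⟨g₀, hg₀, hg₀z⟩ := exists_dual_vector'' ℝ z
  refine ⟨g, hg, le_antisymm (apply_le_norm_of_mem_closedBall hg.1 z) ?_⟩
  exact hg₀z.symm.le.trans (hmax (mem_image_of_mem _ (mem_closedBall_zero_iff.mpr hg₀)))

theorem Finset.pos_of_card_sub_one_lt_sum {ι : Type*} {s : Finset ι} {a : ι → ℝ}
    (ha : ∀ i ∈ s, a i ≤ 1) (hsum : (s.card : ℝ) - 1 < ∑ i ∈ s, a i) {j : ι} (hj : j ∈ s) :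
    0 < a j := by
  classical
  have hrest : ∑ i ∈ s.erase j, a i ≤ (s.card : ℝ) - 1 := by
    calc ∑ i ∈ s.erase j, a i ≤ ∑ _i ∈ s.erase j, (1 : ℝ) :=
          Finset.sum_le_sum fun i hi => ha i (Finset.mem_of_mem_erase hi)
      _ = (s.card : ℝ) - 1 := by
          rw [Finset.sum_const, nsmul_one, Finset.card_erase_of_mem hj,
            Nat.cast_sub (Finset.card_pos.mpr ⟨j, hj⟩), Nat.cast_one]
  linarith [Finset.add_sum_erase s a hj]

theorem exists_unitBallSlice_forall_apply_pos {x : X} (hx : ‖x‖ ≤ 1) {s : Finset (StrongDual ℝ X)}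
    (hs : s.Nonempty) (hball : ∀ g ∈ s, g ∈ closedBall (0 : StrongDual ℝ X) 1)
    (hgx : ∀ g ∈ s, g x = 1) :
    ∃ f δ, ‖f‖ = 1 ∧ 0 < δ ∧ x ∈ unitBallSlice f δ ∧
      ∀ y ∈ unitBallSlice f δ, ∀ g ∈ s, 0 < g y := by
  have hn : (0 : ℝ) < s.card := Nat.cast_pos.mpr hs.card_pos
  set f : StrongDual ℝ X := ∑ g ∈ s, (s.card : ℝ)⁻¹ • g
  have hf : ∀ y, f y = (s.card : ℝ)⁻¹ * ∑ g ∈ s, g y := fun y => by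
    simp [f, Finset.mul_sum]
  have hfx : f x = 1 := by
    rw [hf, Finset.sum_congr rfl hgx, Finset.sum_const, nsmul_one, inv_mul_cancel₀ hn.ne']
  have hf_ball : f ∈ closedBall (0 : StrongDual ℝ X) 1 :=
    (convex_closedBall _ _).sum_mem (fun _ _ => inv_nonneg.mpr hn.le)
      (by rw [Finset.sum_const, nsmul_eq_mul, mul_inv_cancel₀ hn.ne']) hball
  have hf_norm : ‖f‖ = 1 := by
    refine le_antisymm (mem_closedBall_zero_iff.mp hf_ball) ?_
    calc 1 = f x := hfx.symm
      _ ≤ ‖f‖ * ‖x‖ := (le_abs_self _).trans (f.le_opNorm x)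
      _ ≤ ‖f‖ := mul_le_of_le_one_right (norm_nonneg f) hx
  refine ⟨f, (s.card : ℝ)⁻¹, hf_norm, inv_pos.mpr hn, ⟨hx, by rw [hfx]; linarith [inv_pos.mpr hn]⟩,
    fun y ⟨hy, hfy⟩ g hg => ?_⟩
  have hsum : (s.card : ℝ) - 1 < ∑ g ∈ s, g y := by
    rwa [hf, lt_inv_mul_iff₀ hn, mul_sub, mul_one, mul_inv_cancel₀ hn.ne'] at hfy
  exact Finset.pos_of_card_sub_one_lt_sum (a := fun g => g y)
    (fun g hg => (apply_le_norm_of_mem_closedBall (hball g hg) y).trans hy) hsum hg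

theorem norm_sub_le_one_add_sSup {x y : X} (hx : ‖x‖ ≤ 1) (hy : ‖y‖ ≤ 1)
    (hpos : ∀ g ∈ extremePoints ℝ (closedBall (0 : StrongDual ℝ X) 1), g x = 1 → 0 < g y) :
    ‖x - y‖ ≤ 1 + sSup {r | ∃ e ∈ extremePoints ℝ (closedBall (0 : StrongDual ℝ X) 1),
      |e x| < 1 ∧ r = |e x|} := by
  set M := sSup {r | ∃ e ∈ extremePoints ℝ (closedBall (0 : StrongDual ℝ X) 1),
    |e x| < 1 ∧ r = |e x|}
  have hM : 0 ≤ M := Real.sSup_nonneg (by rintro _ ⟨e, -, -, rfl⟩; exact abs_nonneg _)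
  obtain ⟨g, hg, hgn⟩ := exists_mem_extremePoints_closedBall_dual_apply_eq_norm (x - y)
  have hgx : |g x| ≤ 1 := (abs_apply_le_norm_of_mem_closedBall hg.1 x).trans hx
  have hgy : |g y| ≤ 1 := (abs_apply_le_norm_of_mem_closedBall hg.1 y).trans hy
  rw [← hgn, map_sub]
  rcases hgx.lt_or_eq with hlt | heq
  · have hle : |g x| ≤ M := le_csSup ⟨1, by rintro _ ⟨e, -, he, rfl⟩; exact he.le⟩ ⟨g, hg, hlt, rfl⟩
    linarith [le_abs_self (g x), neg_abs_le (g y)]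
  · rcases abs_eq zero_le_one |>.mp heq with h1 | h1
    · linarith [hpos g hg h1]
    · linarith [neg_abs_le (g y)]

theorem deltaC_le_of_forall_norm_sub_le {x : X} {f : StrongDual ℝ X} {δ C : ℝ} (hf : ‖f‖ = 1)
    (hδ : 0 < δ) (hx : x ∈ unitBallSlice f δ) (hC : ∀ y ∈ unitBallSlice f δ, ‖x - y‖ ≤ C) :
    DeltaC x ≤ C := by
  calc DeltaC x ≤ sSup ((fun y => ‖x - y‖) '' unitBallSlice f δ) := by
        refine csInf_le ⟨0, ?_⟩ ⟨f, δ, hf, hδ, hx, rfl⟩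
        rintro _ ⟨-, -, -, -, -, rfl⟩
        exact Real.sSup_nonneg (by rintro _ ⟨y, -, rfl⟩; exact norm_nonneg _)
    _ ≤ C := csSup_le ⟨_, mem_image_of_mem _ hx⟩ fun _ ⟨y, hy, hd⟩ => hd ▸ hC y hy

theorem deltaConstant_le_of_finitely_many_extreme_general (x : X) (hx : ‖x‖ = 1)
    (h : ∃ ε > (0 : ℝ),
      {e ∈ Set.extremePoints ℝ (Metric.closedBall (0 : X →L[ℝ] ℝ) 1) | 1 - ε < |e x|}.Finite) :
    DeltaC x ≤ 1 + sSup {r | ∃ e ∈ Set.extremePoints ℝ (Metric.closedBall (0 : X →L[ℝ] ℝ) 1),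
      |e x| < 1 ∧ r = |e x|} := by
  obtain ⟨ε, hε, hfin⟩ := h
  have hG : {e ∈ extremePoints ℝ (closedBall (0 : StrongDual ℝ X) 1) | e x = 1}.Finite :=
    hfin.subset fun e ⟨he, h1⟩ => ⟨he, by rw [h1, abs_one]; linarith⟩
  obtain ⟨g₀, hg₀, hg₀x⟩ := exists_mem_extremePoints_closedBall_dual_apply_eq_norm x
  obtain ⟨f, δ, hf, hδ, hxS, hpos⟩ := exists_unitBallSlice_forall_apply_pos hx.le (s := hG.toFinset)
    ⟨g₀, hG.mem_toFinset.mpr ⟨hg₀, hg₀x.trans hx⟩⟩ (fun g hg => (hG.mem_toFinset.mp hg).1.1)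
    (fun g hg => (hG.mem_toFinset.mp hg).2)
  exact deltaC_le_of_forall_norm_sub_le hf hδ hxS fun y hy =>
    norm_sub_le_one_add_sSup hx.le hy.1 fun g hg hgx => hpos y hy g (hG.mem_toFinset.mpr ⟨hg, hgx⟩)

/-- If only finitely many extreme points `e*` of the dual unit ball satisfy `|e*(x)| > 1 − ε`
for some `ε > 0`, then `Δc(x) ≤ 1 + sup{|e*(x)| : e* extreme, |e*(x)| < 1}`. -/
theorem deltaConstant_le_of_finitely_many_extreme [CompleteSpace X] (x : X) (hx : ‖x‖ = 1)
    (h : ∃ ε > (0 : ℝ),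
      {e ∈ Set.extremePoints ℝ (Metric.closedBall (0 : X →L[ℝ] ℝ) 1) | 1 - ε < |e x|}.Finite) :
    DeltaC x ≤ 1 + sSup {r | ∃ e ∈ Set.extremePoints ℝ (Metric.closedBall (0 : X →L[ℝ] ℝ) 1),
      |e x| < 1 ∧ r = |e x|} :=
  deltaConstant_le_of_finitely_many_extreme_general x hx h
end
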